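/- Let ρ be a congruence on a completely regular semigroup S such that ρ_k ∩ Θ = ε (the equality relation). Then ρ_k is contained in Green's relation H, and consequently each ρ_k-class of an idempotent is a subgroup of the maximal subgroup containing that idempotent (i.e., ρ_k is over groups). -/
import Mathlib


/-- A completely regular semigroup: a semigroup with a unary inversion such that
every element lies in a subgroup; `a⁻¹` is the group inverse of `a` in its maximal
subgroup and `a * a⁻¹` is the identity of that subgroup. -/
class CompletelyRegularSemigroup (S : Type*) extends Semigroup S, Inv S where
  mul_inv_mul (a : S) : a * a⁻¹ * a = a
  inv_mul_inv (a : S) : a⁻¹ * a * a⁻¹ = a⁻¹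
  mul_inv_comm (a : S) : a * a⁻¹ = a⁻¹ * a

variable {S : Type*} [CompletelyRegularSemigroup S]

/-- Green's relation `H` on a completely regular semigroup: `a H b` iff
`a` and `b` lie in the same maximal subgroup, i.e. `a⁰ = b⁰`. -/
def hRel (a b : S) : Prop := a * a⁻¹ = b * b⁻¹

/-- The relation `Θ`: `a Θ b` iff `a⁰ * b = a * b⁰`. -/
def thetaRel (a b : S) : Prop := (a * a⁻¹) * b = a * (b * b⁻¹)

/-- The relation `F`: `a F b` iff `a * b⁻¹` is idempotent. -/
def fRel (a b : S) : Prop := IsIdempotentElem (a * b⁻¹)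

/-- The kernel of a congruence: the union of the congruence classes of idempotents. -/
def conKer (c : Con S) : Set S := {a | ∃ e : S, IsIdempotentElem e ∧ c a e}


lemma comm_inv_unique {T : Type*} [Semigroup T] {a x y : T}
    (hx1 : a * x * a = a) (hx2 : x * a * x = x) (hx3 : a * x = x * a)
    (hy1 : a * y * a = a) (hy2 : y * a * y = y) (hy3 : a * y = y * a) :
    x = y := by
  have key : a * y = a * x := by
    have h1 : a * x * (a * y) = a * y := by rw [← mul_assoc, hx1]
    have h2 : a * x * (a * y) = a * x := by
      rw [hx3, hy3, mul_assoc, ← mul_assoc a y a, hy1]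
    rw [← h1, h2]
  have : y = x := by
    calc y = y * a * y := hy2.symm
    _ = y * (a * x) := by rw [mul_assoc, key]
    _ = a * y * x := by rw [← mul_assoc, ← hy3]
    _ = x * a * x := by rw [key, hx3]
    _ = x := hx2
  exact this.symm

lemma idem_inv {e : S} (he : IsIdempotentElem e) : e⁻¹ = e :=
  comm_inv_unique (CompletelyRegularSemigroup.mul_inv_mul e)
    (CompletelyRegularSemigroup.inv_mul_inv e)
    (CompletelyRegularSemigroup.mul_inv_comm e)
    (by rw [he, he]) (by rw [he, he]) rfl

lemma idem_zero {e : S} (he : IsIdempotentElem e) : e * e⁻¹ = e := by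
  rw [idem_inv he]; exact he

lemma con_inv (c : Con S) {a b : S} (h : c a b) : c a⁻¹ b⁻¹ := by
  have hab : (a : c.Quotient) = b := (Con.eq c).mpr h
  refine (Con.eq c).mp (comm_inv_unique (a := (a : c.Quotient))
    ?_ ?_ ?_ ?_ ?_ ?_)
  · exact congrArg _ (CompletelyRegularSemigroup.mul_inv_mul a)
  · exact congrArg _ (CompletelyRegularSemigroup.inv_mul_inv a)
  · exact congrArg _ (CompletelyRegularSemigroup.mul_inv_comm a)
  · rw [hab]; exact congrArg _ (CompletelyRegularSemigroup.mul_inv_mul b)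
  · rw [hab]; exact congrArg _ (CompletelyRegularSemigroup.inv_mul_inv b)
  · rw [hab]; exact congrArg _ (CompletelyRegularSemigroup.mul_inv_comm b)

lemma zero_idem (a : S) : IsIdempotentElem (a * a⁻¹) := by
  show a * a⁻¹ * (a * a⁻¹) = a * a⁻¹
  rw [← mul_assoc, CompletelyRegularSemigroup.mul_inv_mul]

/-- If `ρ_k ∩ Θ = ε`, then `ρ_k ⊆ H`, and each `ρ_k`-class of an idempotent `e`
is a subgroup of the maximal subgroup `H_e` (so `ρ_k` is over groups). -/
theorem rho_k_over_groups (ρ ρk : Con S)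
    (hker : conKer ρk = conKer ρ)
    (hleast : ∀ θ : Con S, conKer θ = conKer ρ → ρk ≤ θ)
    (htheta : ∀ a b : S, ρk a b → thetaRel a b → a = b) :
    (∀ a b : S, ρk a b → hRel a b) ∧
    ∀ e a : S, IsIdempotentElem e → ρk a e → a * a⁻¹ = e ∧ ρk a⁻¹ e := by
  have hH : ∀ a b : S, ρk a b → hRel a b := by
    intro a b h
    have h' : ρk (a * a⁻¹) (b * b⁻¹) := ρk.mul h (con_inv ρk h)
    have ht : thetaRel (a * a⁻¹) (b * b⁻¹) := by
      unfold thetaRel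
      rw [idem_zero (zero_idem a), idem_zero (zero_idem b)]
    exact htheta _ _ h' ht
  refine ⟨hH, fun e a he h => ?_⟩
  have h1 := hH a e h
  unfold hRel at h1
  constructor
  · rw [h1]; exact idem_zero he
  · have h2 := con_inv ρk h
    rwa [idem_inv he] at h2
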